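/- arXiv:2505.12919 — 4 statements merged into one kernel-verified Lean document; each statement's English description precedes it below -/
import Mathlib

section
/- Let U ∈ R^{n1×r} and V ∈ R^{n2×r} be perfectly balanced, i.e. UᵀU = VᵀV, and let Z ∈ R^{(n1+n2)×r} be the vertical stacking of U and V. Then the operator norm of Z satisfies ‖Z‖_op = √(2·σ₁(UVᵀ)), where σ₁(UVᵀ) is the largest singular value of UVᵀ. -/
open Matrix

noncomputable def opNorm {m n : Type*} [Fintype m] [Fintype n] [DecidableEq n]
    (A : Matrix m n ℝ) : ℝ :=
  ‖LinearMap.toContinuousLinearMap (Matrix.toEuclideanLin A)‖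

noncomputable def frob {m n : Type*} [Fintype m] [Fintype n] (A : Matrix m n ℝ) : ℝ :=
  Real.sqrt (∑ i, ∑ j, (A i j) ^ 2)

noncomputable def frobS {n1 n2 : ℕ} (S : Finset (Fin n1 × Fin n2))
    (A : Matrix (Fin n1) (Fin n2) ℝ) : ℝ :=
  Real.sqrt (∑ p ∈ S, (A p.1 p.2) ^ 2)

noncomputable def dP {m : Type*} [Fintype m] {r : ℕ}
    (Z Z' : Matrix m (Fin r) ℝ) : ℝ :=
  sInf { d | ∃ P : Matrix (Fin r) (Fin r) ℝ, Pᵀ * P = 1 ∧ d = frob (Z - Z' * P) }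

section auxOpNorm
open scoped Matrix.Norms.L2Operator

lemma myOp_eq_norm {m n : Type*} [Fintype m] [Fintype n] [DecidableEq n]
    (A : Matrix m n ℝ) : opNorm A = ‖A‖ := rfl

lemma myOp_transpose_mul_self {m n : Type*} [Fintype m] [Fintype n] [DecidableEq m] [DecidableEq n]
    (A : Matrix m n ℝ) : ‖Aᵀ * A‖ = ‖A‖ * ‖A‖ := by
  rw [← conjTranspose_eq_transpose_of_trivial]
  exact l2_opNorm_conjTranspose_mul_self A

lemma myOp_transpose {m n : Type*} [Fintype m] [Fintype n] [DecidableEq m] [DecidableEq n]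
    (A : Matrix m n ℝ) : ‖Aᵀ‖ = ‖A‖ := by
  rw [← conjTranspose_eq_transpose_of_trivial]
  exact l2_opNorm_conjTranspose A

/-- For perfectly balanced factors `UᵀU = VᵀV`, the operator norm of the stacked
matrix `Z = [U; V]` equals `√(2 σ₁(UVᵀ))` (the largest singular value of a matrix
being its operator norm). -/
theorem opNorm_fromRows_balanced {n1 n2 r : ℕ}
    (U : Matrix (Fin n1) (Fin r) ℝ) (V : Matrix (Fin n2) (Fin r) ℝ)
    (hbal : Uᵀ * U = Vᵀ * V) :
    opNorm (Matrix.fromRows U V) = Real.sqrt (2 * opNorm (U * Vᵀ)) := by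
  rw [myOp_eq_norm, myOp_eq_norm]
  set Z := Matrix.fromRows U V with hZdef
  -- `ZᵀZ = 2 • VᵀV`
  have hZtZ : Zᵀ * Z = (2 : ℝ) • (Vᵀ * V) := by
    rw [hZdef, transpose_fromRows, fromCols_mul_fromRows, hbal, two_smul]
  -- hence `‖Z‖² = 2 ‖V‖²`
  have hZ2 : ‖Z‖ * ‖Z‖ = 2 * (‖V‖ * ‖V‖) := by
    rw [← myOp_transpose_mul_self Z, hZtZ, norm_smul, ← myOp_transpose_mul_self V]
    simp
  -- `‖VVᵀ‖ = ‖V‖²`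
  have hVVt : ‖V * Vᵀ‖ = ‖V‖ * ‖V‖ := by
    have := myOp_transpose_mul_self Vᵀ
    rwa [transpose_transpose, myOp_transpose] at this
  have hsym : (V * Vᵀ)ᵀ = V * Vᵀ := by
    rw [transpose_mul, transpose_transpose]
  -- `‖UVᵀ‖ = ‖V‖²` using balancedness
  have hUVt : ‖U * Vᵀ‖ = ‖V‖ * ‖V‖ := by
    have h1 : ‖(U * Vᵀ)ᵀ * (U * Vᵀ)‖ = (‖V‖ * ‖V‖) * (‖V‖ * ‖V‖) := by
      have : (U * Vᵀ)ᵀ * (U * Vᵀ) = (V * Vᵀ)ᵀ * (V * Vᵀ) := by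
        rw [hsym, transpose_mul, transpose_transpose]
        calc V * Uᵀ * (U * Vᵀ) = V * (Uᵀ * U) * Vᵀ := by simp only [Matrix.mul_assoc]
          _ = V * (Vᵀ * V) * Vᵀ := by rw [hbal]
          _ = V * Vᵀ * (V * Vᵀ) := by simp only [Matrix.mul_assoc]
      rw [this, myOp_transpose_mul_self, hVVt]
    rw [myOp_transpose_mul_self] at h1
    nlinarith [norm_nonneg (U * Vᵀ), norm_nonneg V]
  have : 2 * ‖U * Vᵀ‖ = ‖Z‖ * ‖Z‖ := by rw [hUVt, hZ2]
  rw [this]; exact (Real.sqrt_mul_self (norm_nonneg Z)).symm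

end auxOpNorm
end

section
/- Let X = L* + S* with S* supported on Λ* ⊆ Ω ⊆ [n1]×[n2]. Suppose that for every row i, the number of corrupted entries satisfies |Λ*_{(i,·)}| ≤ α·r_i and for every column j, |Λ*_{(·,j)}| ≤ α·c_j, where r_i = |Ω_{(i,·)}|, c_j = |Ω_{(·,j)}|, and 0 < α < 1. Let L be any matrix and let Λ be the support of the thresholding operator T_{γα}(L − X, Ω) with over-removal factor 1 < γ ≤ 1/α, which keeps entry (i,j) ∈ Ω iff |（L−X)_{ij}| strictly exceeds both the ⌈γα·r_i⌉-th largest magnitude in row i of P_Ω(L−X) and the ⌈γα·c_j⌉-th largest magnitude in column j. Then ‖L − X‖_{F((Ω\Λ) ∩ Λ*)} ≤ √(2/(γ−1)) · ‖L − L*‖_{F(Ω)}. -/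
open Matrix

/-- The `k`-th largest element of a multiset of reals (`0` if out of range). -/
noncomputable def kthLargest (m : Multiset ℝ) (k : ℕ) : ℝ :=
  (m.sort (· ≤ ·)).getD ((m.sort (· ≤ ·)).length - k) 0

open scoped Classical in
/-- The thresholding operator support `T_θ(A, Ω)`: keep `(i,j) ∈ Ω` iff `|A_{ij}|`
strictly exceeds both the `⌈θ·r_i⌉`-th largest magnitude in row `i` of `P_Ω(A)`
and the `⌈θ·c_j⌉`-th largest magnitude in column `j` of `P_Ω(A)`. -/
noncomputable def threshSupport {n1 n2 : ℕ} (A : Matrix (Fin n1) (Fin n2) ℝ)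
    (Ω : Finset (Fin n1 × Fin n2)) (θ : ℝ) : Finset (Fin n1 × Fin n2) :=
  Ω.filter fun p =>
    kthLargest (((Ω.filter fun q => q.1 = p.1).val.map fun q => |A q.1 q.2|))
        ⌈θ * ((Ω.filter fun q => q.1 = p.1).card : ℝ)⌉₊ < |A p.1 p.2| ∧
    kthLargest (((Ω.filter fun q => q.2 = p.2).val.map fun q => |A q.1 q.2|))
        ⌈θ * ((Ω.filter fun q => q.2 = p.2).card : ℝ)⌉₊ < |A p.1 p.2|

/-! Fix a row (or a column) `F` of `Ω` whose corrupted part `C` has `#C ≤ α #F`, and let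
`t` be the `⌈γα #F⌉`-th largest value of `|L - X|` on `F`. At least `(γ - 1) α #F` of the
entries reaching `t` are uncorrupted, and there `L - X = L - L*`, so
`(γ - 1) α #F t² ≤ ‖L - L*‖²_{F(F)}`. The corrupted entries of `F` that lie below `t` have
squared mass at most `#C t² ≤ α #F t²`. A corrupted entry that survives thresholding lies
below its row threshold or below its column threshold; summing the line estimate over the
rows and over the columns gives the factor `2 / (γ - 1)`. -/

section

open Finset

theorem kthLargest_mem {m : Multiset ℝ} {k : ℕ} (hk1 : 1 ≤ k) (hk : k ≤ Multiset.card m) :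
    kthLargest m k ∈ m := by
  have hlt : (m.sort (· ≤ ·)).length - k < (m.sort (· ≤ ·)).length := by
    rw [Multiset.length_sort]; omega
  rw [kthLargest, List.getD_eq_getElem _ _ hlt, ← Multiset.mem_sort (r := (· ≤ ·))]
  exact List.getElem_mem hlt

theorem le_countP_kthLargest_le {m : Multiset ℝ} {k : ℕ} (hk : k ≤ Multiset.card m) :
    k ≤ m.countP (kthLargest m k ≤ ·) := by
  rcases Nat.eq_zero_or_pos k with rfl | hk1
  · exact Nat.zero_le _
  obtain ⟨l, hl⟩ : ∃ l, m.sort (· ≤ ·) = l := ⟨_, rfl⟩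
  have hlen : l.length = Multiset.card m := hl ▸ Multiset.length_sort _
  have hsorted : l.Pairwise (· ≤ ·) := hl ▸ Multiset.pairwise_sort m (· ≤ ·)
  have hlt : l.length - k < l.length := by omega
  have ht : kthLargest m k = l[l.length - k] := by
    rw [kthLargest, hl, List.getD_eq_getElem _ _ hlt]
  have htop : ∀ x ∈ l.drop (l.length - k), kthLargest m k ≤ x := by
    intro x hx
    obtain ⟨i, hi, rfl⟩ := List.mem_iff_getElem.mp hx
    rw [List.getElem_drop, ht]
    exact hsorted.rel_get_of_le (a := ⟨_, hlt⟩) (b := ⟨_, by simp at hi; omega⟩) (by simp)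
  generalize kthLargest m k = t at htop ⊢
  rw [← Multiset.sort_eq m (· ≤ ·), hl, Multiset.coe_countP]
  calc k = (l.drop (l.length - k)).length := by simp; omega
    _ = (l.drop (l.length - k)).countP (t ≤ ·) :=
      (List.countP_eq_length.mpr (by simpa using htop)).symm
    _ ≤ l.countP (t ≤ ·) := (List.drop_sublist _ _).countP_le

theorem exists_mem_kthLargest_map_eq {ι : Type*} (F : Finset ι) (f : ι → ℝ) {k : ℕ}
    (hk1 : 1 ≤ k) (hk : k ≤ #F) : ∃ a ∈ F, kthLargest (F.val.map f) k = f a := by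
  obtain ⟨a, ha, hfa⟩ :=
    Multiset.mem_map.mp (kthLargest_mem (m := F.val.map f) hk1 (by rwa [Multiset.card_map]))
  exact ⟨a, ha, hfa.symm⟩

theorem le_card_filter_kthLargest_map_le {ι : Type*} (F : Finset ι) (f : ι → ℝ) {k : ℕ}
    (hk : k ≤ #F) : k ≤ #{p ∈ F | kthLargest (F.val.map f) k ≤ f p} := by
  have h := le_countP_kthLargest_le (m := F.val.map f) (k := k) (by rwa [Multiset.card_map])
  rwa [Multiset.countP_map] at h

theorem sum_sq_le_of_le_kthLargest {ι : Type*} [DecidableEq ι] {F C T : Finset ι}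
    (hCF : C ⊆ F) (hTC : T ⊆ C) {f g : ι → ℝ} (hf0 : ∀ p, 0 ≤ f p)
    (hfg : ∀ p ∈ F \ C, f p ≤ g p) {α γ : ℝ} (hα0 : 0 < α) (hγ1 : 1 < γ)
    (hγα : γ * α ≤ 1) (hC : (#C : ℝ) ≤ α * #F)
    (hT : ∀ p ∈ T, f p ≤ kthLargest (F.val.map f) ⌈γ * α * #F⌉₊) :
    ∑ p ∈ T, f p ^ 2 ≤ (γ - 1)⁻¹ * ∑ p ∈ F, g p ^ 2 := by
  rcases F.eq_empty_or_nonempty with rfl | hF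
  · simp [subset_empty.mp (hTC.trans hCF)]
  set k := ⌈γ * α * #F⌉₊
  have hF_pos : (0 : ℝ) < #F := by exact_mod_cast hF.card_pos
  have hk1 : 1 ≤ k := Nat.one_le_iff_ne_zero.mpr (Nat.ceil_pos.mpr (by positivity)).ne'
  have hkF : k ≤ #F := Nat.ceil_le.mpr (by nlinarith)
  set t := kthLargest (F.val.map f) k
  have ht0 : 0 ≤ t := by
    obtain ⟨a, -, hta⟩ := exists_mem_kthLargest_map_eq F f hk1 hkF
    exact (show t = f a from hta) ▸ hf0 a
  set G := {p ∈ F | t ≤ f p}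
  have hupper : ∑ p ∈ T, f p ^ 2 ≤ #C * t ^ 2 :=
    calc ∑ p ∈ T, f p ^ 2 ≤ ∑ p ∈ T, t ^ 2 :=
          sum_le_sum fun p hp => pow_le_pow_left₀ (hf0 p) (hT p hp) 2
      _ = #T * t ^ 2 := by rw [sum_const, nsmul_eq_mul]
      _ ≤ #C * t ^ 2 := by gcongr
  have hlower : ((k : ℝ) - #C) * t ^ 2 ≤ ∑ p ∈ F, g p ^ 2 := by
    have hcard : (k : ℝ) - #C ≤ #(G \ C) := by
      have hkG : (k : ℝ) ≤ #G := by exact_mod_cast le_card_filter_kthLargest_map_le F f hkF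
      have hGC : (#G : ℝ) ≤ #(G \ C) + #C := by exact_mod_cast card_le_card_sdiff_add_card
      linarith
    calc ((k : ℝ) - #C) * t ^ 2 ≤ #(G \ C) * t ^ 2 := by gcongr
      _ = ∑ p ∈ G \ C, t ^ 2 := by rw [sum_const, nsmul_eq_mul]
      _ ≤ ∑ p ∈ G \ C, g p ^ 2 := sum_le_sum fun p hp => by
          obtain ⟨hpG, hpC⟩ := mem_sdiff.mp hp
          obtain ⟨hpF, htp⟩ := mem_filter.mp hpG
          exact pow_le_pow_left₀ ht0 (htp.trans (hfg p (mem_sdiff.mpr ⟨hpF, hpC⟩))) 2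
      _ ≤ ∑ p ∈ F, g p ^ 2 :=
          sum_le_sum_of_subset_of_nonneg (sdiff_subset.trans (filter_subset _ _))
            fun _ _ _ => sq_nonneg _
  have hk : γ * α * #F ≤ k := Nat.le_ceil _
  rw [inv_mul_eq_div, le_div_iff₀ (sub_pos.mpr hγ1)]
  calc (∑ p ∈ T, f p ^ 2) * (γ - 1) ≤ #C * t ^ 2 * (γ - 1) := by gcongr
    _ ≤ α * #F * t ^ 2 * (γ - 1) := by gcongr
    _ = (γ * α * #F - α * #F) * t ^ 2 := by ring
    _ ≤ ((k : ℝ) - #C) * t ^ 2 := by gcongr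
    _ ≤ ∑ p ∈ F, g p ^ 2 := hlower

theorem sum_sq_le_of_le_kthLargest_fiberwise {ι κ : Type*} [DecidableEq ι] [Fintype κ]
    [DecidableEq κ] (π : ι → κ) {Ω C T : Finset ι} (hCΩ : C ⊆ Ω) (hTC : T ⊆ C)
    {f g : ι → ℝ} (hf0 : ∀ p, 0 ≤ f p) (hfg : ∀ p ∈ Ω \ C, f p ≤ g p) {α γ : ℝ}
    (hα0 : 0 < α) (hγ1 : 1 < γ) (hγα : γ * α ≤ 1)
    (hC : ∀ i, (#{p ∈ C | π p = i} : ℝ) ≤ α * #{p ∈ Ω | π p = i})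
    (hT : ∀ p ∈ T, f p ≤ kthLargest ({q ∈ Ω | π q = π p}.val.map f)
      ⌈γ * α * #{q ∈ Ω | π q = π p}⌉₊) :
    ∑ p ∈ T, f p ^ 2 ≤ (γ - 1)⁻¹ * ∑ p ∈ Ω, g p ^ 2 := by
  rw [← sum_fiberwise T π, ← sum_fiberwise Ω π, mul_sum]
  refine sum_le_sum fun i _ => sum_sq_le_of_le_kthLargest (filter_subset_filter _ hCΩ)
    (filter_subset_filter _ hTC) hf0 (fun p hp => hfg p ?_) hα0 hγ1 hγα (hC i) fun p hp => ?_
  · simp only [mem_sdiff, mem_filter] at hp ⊢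
    tauto
  · obtain ⟨hpT, rfl⟩ := mem_filter.mp hp
    exact hT p hpT

theorem le_or_le_of_notMem_threshSupport {n1 n2 : ℕ} {A : Matrix (Fin n1) (Fin n2) ℝ}
    {Ω : Finset (Fin n1 × Fin n2)} {θ : ℝ} {p : Fin n1 × Fin n2} (hpΩ : p ∈ Ω)
    (hp : p ∉ threshSupport A Ω θ) :
    |A p.1 p.2| ≤ kthLargest ({q ∈ Ω | q.1 = p.1}.val.map fun q => |A q.1 q.2|)
        ⌈θ * #{q ∈ Ω | q.1 = p.1}⌉₊ ∨
      |A p.1 p.2| ≤ kthLargest ({q ∈ Ω | q.2 = p.2}.val.map fun q => |A q.1 q.2|)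
        ⌈θ * #{q ∈ Ω | q.2 = p.2}⌉₊ := by
  by_contra h
  simp only [not_or, not_le] at h
  exact hp (mem_filter.mpr ⟨hpΩ, h⟩)

theorem sum_sq_sdiff_threshSupport_inter_le {n1 n2 : ℕ} (A D : Matrix (Fin n1) (Fin n2) ℝ)
    {Ω Λstar : Finset (Fin n1 × Fin n2)} (hΛΩ : Λstar ⊆ Ω)
    (hAD : ∀ p ∈ Ω \ Λstar, |A p.1 p.2| ≤ |D p.1 p.2|) {α γ : ℝ} (hα0 : 0 < α)
    (hγ1 : 1 < γ) (hγα : γ * α ≤ 1)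
    (hrow : ∀ i, (#{p ∈ Λstar | p.1 = i} : ℝ) ≤ α * #{p ∈ Ω | p.1 = i})
    (hcol : ∀ j, (#{p ∈ Λstar | p.2 = j} : ℝ) ≤ α * #{p ∈ Ω | p.2 = j}) :
    ∑ p ∈ (Ω \ threshSupport A Ω (γ * α)) ∩ Λstar, A p.1 p.2 ^ 2 ≤
      2 / (γ - 1) * ∑ p ∈ Ω, D p.1 p.2 ^ 2 := by
  set T := (Ω \ threshSupport A Ω (γ * α)) ∩ Λstar
  set f : Fin n1 × Fin n2 → ℝ := fun p => |A p.1 p.2|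
  have hf0 : ∀ p, 0 ≤ f p := fun _ => abs_nonneg _
  have hTΛ : T ⊆ Λstar := inter_subset_right
  set below_row := fun p : Fin n1 × Fin n2 => f p ≤ kthLargest
    ({q ∈ Ω | q.1 = p.1}.val.map f) ⌈γ * α * #{q ∈ Ω | q.1 = p.1}⌉₊
  have hrow_part := sum_sq_le_of_le_kthLargest_fiberwise Prod.fst hΛΩ
    ((filter_subset below_row T).trans hTΛ) hf0 hAD hα0 hγ1 hγα hrow
    fun p hp => (mem_filter.mp hp).2
  have hcol_part := sum_sq_le_of_le_kthLargest_fiberwise Prod.snd hΛΩ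
    ((filter_subset (¬ below_row ·) T).trans hTΛ) hf0 hAD hα0 hγ1 hγα hcol
    fun p hp => by
      obtain ⟨hpT, hp_above_row⟩ := mem_filter.mp hp
      obtain ⟨hpΩ, hp_kept⟩ := mem_sdiff.mp (mem_inter.mp hpT).1
      exact (le_or_le_of_notMem_threshSupport hpΩ hp_kept).resolve_left hp_above_row
  calc ∑ p ∈ T, A p.1 p.2 ^ 2 = ∑ p ∈ T, f p ^ 2 := sum_congr rfl fun _ _ => (sq_abs _).symm
    _ = ∑ p ∈ T with below_row p, f p ^ 2 + ∑ p ∈ T with ¬ below_row p, f p ^ 2 :=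
      (sum_filter_add_sum_filter_not _ _ _).symm
    _ ≤ 2 / (γ - 1) * ∑ p ∈ Ω, |D p.1 p.2| ^ 2 := by
      rw [div_eq_mul_inv, two_mul, add_mul]
      exact add_le_add hrow_part hcol_part
    _ = 2 / (γ - 1) * ∑ p ∈ Ω, D p.1 p.2 ^ 2 := by simp only [sq_abs]

theorem frobS_le_sqrt_mul_frobS {n1 n2 : ℕ} {S S' : Finset (Fin n1 × Fin n2)}
    {A B : Matrix (Fin n1) (Fin n2) ℝ} {c : ℝ} (hc : 0 ≤ c)
    (h : ∑ p ∈ S, A p.1 p.2 ^ 2 ≤ c * ∑ p ∈ S', B p.1 p.2 ^ 2) :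
    frobS S A ≤ Real.sqrt c * frobS S' B := by
  rw [frobS, frobS, ← Real.sqrt_mul hc]
  exact Real.sqrt_le_sqrt h

end

theorem corrupted_observed_error_bound_general {n1 n2 : ℕ}
    (Lstar Sstar L : Matrix (Fin n1) (Fin n2) ℝ)
    (X : Matrix (Fin n1) (Fin n2) ℝ) (hX : X = Lstar + Sstar)
    (Ω Λstar : Finset (Fin n1 × Fin n2)) (hΛΩ : Λstar ⊆ Ω)
    (hsupp : ∀ p : Fin n1 × Fin n2, p ∉ Λstar → Sstar p.1 p.2 = 0)
    (α γ : ℝ) (hα0 : 0 < α) (hγ1 : 1 < γ) (hγα : γ ≤ 1 / α)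
    (hrow : ∀ i : Fin n1,
      ((Λstar.filter fun p => p.1 = i).card : ℝ) ≤
        α * ((Ω.filter fun p => p.1 = i).card : ℝ))
    (hcol : ∀ j : Fin n2,
      ((Λstar.filter fun p => p.2 = j).card : ℝ) ≤
        α * ((Ω.filter fun p => p.2 = j).card : ℝ)) :
    frobS ((Ω \ threshSupport (L - X) Ω (γ * α)) ∩ Λstar) (L - X) ≤
      Real.sqrt (2 / (γ - 1)) * frobS Ω (L - Lstar) := by
  have hγα' : γ * α ≤ 1 := by rwa [le_div_iff₀ hα0] at hγα
  have hclean : ∀ p ∈ Ω \ Λstar, |(L - X) p.1 p.2| ≤ |(L - Lstar) p.1 p.2| := fun p hp => by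
    simp [hX, hsupp p (Finset.mem_sdiff.mp hp).2]
  exact frobS_le_sqrt_mul_frobS (div_nonneg zero_le_two (sub_nonneg.mpr hγ1.le))
    (sum_sq_sdiff_threshSupport_inter_le _ _ hΛΩ hclean hα0 hγ1 hγα' hrow hcol)

/-- If in each row and column at most an `α`-fraction of the observed entries are
corrupted, and `Λ` is obtained by thresholding `L − X` over `Ω` with over-removal
factor `γ ∈ (1, 1/α]`, then the error on the remaining corrupted entries satisfies
`‖L − X‖_{F((Ω\Λ)∩Λ*)} ≤ √(2/(γ−1)) · ‖L − L*‖_{F(Ω)}`. -/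
theorem corrupted_observed_error_bound {n1 n2 : ℕ}
    (Lstar Sstar L : Matrix (Fin n1) (Fin n2) ℝ)
    (X : Matrix (Fin n1) (Fin n2) ℝ) (hX : X = Lstar + Sstar)
    (Ω Λstar : Finset (Fin n1 × Fin n2)) (hΛΩ : Λstar ⊆ Ω)
    (hsupp : ∀ p : Fin n1 × Fin n2, p ∉ Λstar → Sstar p.1 p.2 = 0)
    (α γ : ℝ) (hα0 : 0 < α) (hα1 : α < 1) (hγ1 : 1 < γ) (hγα : γ ≤ 1 / α)
    (hrow : ∀ i : Fin n1,
      ((Λstar.filter fun p => p.1 = i).card : ℝ) ≤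
        α * ((Ω.filter fun p => p.1 = i).card : ℝ))
    (hcol : ∀ j : Fin n2,
      ((Λstar.filter fun p => p.2 = j).card : ℝ) ≤
        α * ((Ω.filter fun p => p.2 = j).card : ℝ)) :
    frobS ((Ω \ threshSupport (L - X) Ω (γ * α)) ∩ Λstar) (L - X) ≤
      Real.sqrt (2 / (γ - 1)) * frobS Ω (L - Lstar) :=
  corrupted_observed_error_bound_general Lstar Sstar L X hX Ω Λstar hΛΩ hsupp α γ hα0 hγ1 hγα hrow
    hcol
end

section
/- Let Z = [U; V] and Z' = [U'; V'] in R^{(n1+n2)×r}, and let d_P(Z', Z) = min{‖Z' − ZP‖_F : P ∈ R^{r×r} orthogonal} be the Procrustes distance. Set a = (√2 · max{σ₁(U), σ₁(V)} · d_P(Z', Z) + (1/2)·d_P(Z', Z)²). Then ‖U'ᵀU' − V'ᵀV'‖_F ≤ ‖UᵀU − VᵀV‖_F + 2a, and ‖U'V'ᵀ − UVᵀ‖_F ≤ a. -/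
open Matrix

/-! For an orthogonal `P` write `U' = U P + ΔU` and `V' = V P + ΔV`; then `d = ‖Z' - Z P‖_F`
satisfies `d² = ‖ΔU‖² + ‖ΔV‖²`, so `‖ΔU‖ + ‖ΔV‖ ≤ √2 d` and `‖ΔU‖ ‖ΔV‖ ≤ d² / 2`.
Expanding, `U'ᵀU' - V'ᵀV'` is `Pᵀ (UᵀU - VᵀV) P` plus, for each block, two mutually transposed
cross terms of norm at most `σ₁ ‖Δ‖` and the quadratic term `ΔᵀΔ`, while
`U'V'ᵀ - UVᵀ = U P ΔVᵀ + ΔU Pᵀ Vᵀ + ΔU ΔVᵀ`. This gives both bounds with `d` in place of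
`d_P(Z', Z)` for every `P`; as the bounds are continuous in `d`, they pass to the infimum. -/

lemma transpose_mem_orthogonalGroup {k R : Type*} [Fintype k] [DecidableEq k] [CommRing R]
    {P : Matrix k k R} (hP : P ∈ orthogonalGroup k R) : Pᵀ ∈ orthogonalGroup k R := by
  rwa [mem_orthogonalGroup_iff, transpose_transpose, ← mem_orthogonalGroup_iff']

section Frobenius
open scoped Matrix.Norms.Frobenius
variable {l m n : Type*} [Fintype l] [Fintype m] [Fintype n]

lemma frob_eq_norm (A : Matrix m n ℝ) : frob A = ‖A‖ := by
  rw [frob, frobenius_norm_def, Real.sqrt_eq_rpow]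
  simp [sq_abs]

lemma frob_sq (A : Matrix m n ℝ) : frob A ^ 2 = ∑ i, ∑ j, A i j ^ 2 :=
  Real.sq_sqrt (by positivity)

lemma frob_nonneg (A : Matrix m n ℝ) : 0 ≤ frob A := Real.sqrt_nonneg _

lemma frob_add_le (A B : Matrix m n ℝ) : frob (A + B) ≤ frob A + frob B := by
  simpa only [frob_eq_norm] using norm_add_le A B

lemma frob_sub_le (A B : Matrix m n ℝ) : frob (A - B) ≤ frob A + frob B := by
  simpa only [frob_eq_norm] using norm_sub_le A B

lemma frob_transpose (A : Matrix m n ℝ) : frob Aᵀ = frob A := by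
  simpa only [frob_eq_norm] using frobenius_norm_transpose A

lemma frob_mul_le (A : Matrix l m ℝ) (B : Matrix m n ℝ) : frob (A * B) ≤ frob A * frob B := by
  simpa only [frob_eq_norm] using frobenius_norm_mul A B

lemma frob_sq_eq_trace (A : Matrix m n ℝ) : frob A ^ 2 = trace (A * Aᵀ) := by
  rw [frob_sq]
  simp only [trace, diag_apply, mul_apply, transpose_apply, sq]

lemma frob_fromRows (A : Matrix m n ℝ) (B : Matrix l n ℝ) :
    frob (fromRows A B) = √(frob A ^ 2 + frob B ^ 2) := by
  rw [frob_sq, frob_sq, frob]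
  simp only [Fintype.sum_sum_type, fromRows_apply_inl, fromRows_apply_inr]

lemma frob_mul_orthogonal [DecidableEq n] (A : Matrix m n ℝ) {P : Matrix n n ℝ}
    (hP : P ∈ orthogonalGroup n ℝ) : frob (A * P) = frob A := by
  rw [← sq_eq_sq₀ (frob_nonneg _) (frob_nonneg _), frob_sq_eq_trace, frob_sq_eq_trace,
    transpose_mul, Matrix.mul_assoc, ← Matrix.mul_assoc P, (mem_orthogonalGroup_iff _ _).1 hP,
    Matrix.one_mul]

lemma frob_orthogonal_mul [DecidableEq m] (A : Matrix m n ℝ) {P : Matrix m m ℝ}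
    (hP : P ∈ orthogonalGroup m ℝ) : frob (P * A) = frob A := by
  rw [← frob_transpose, transpose_mul, frob_mul_orthogonal _ (transpose_mem_orthogonalGroup hP),
    frob_transpose]

end Frobenius

section L2Operator
open scoped Matrix.Norms.L2Operator
variable {l m n : Type*} [Fintype l] [Fintype m] [Fintype n]

lemma opNorm_eq_norm [DecidableEq n] (A : Matrix m n ℝ) : opNorm A = ‖A‖ := rfl

lemma opNorm_nonneg [DecidableEq n] (A : Matrix m n ℝ) : 0 ≤ opNorm A := norm_nonneg _

lemma opNorm_transpose [DecidableEq m] [DecidableEq n] (A : Matrix m n ℝ) :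
    opNorm Aᵀ = opNorm A := by
  simpa only [opNorm_eq_norm, conjTranspose_eq_transpose_of_trivial]
    using l2_opNorm_conjTranspose A

lemma frob_sq_eq_sum_norm_col_sq (A : Matrix m n ℝ) :
    frob A ^ 2 = ∑ j, ‖(EuclideanSpace.equiv m ℝ).symm (Aᵀ j)‖ ^ 2 := by
  simp [frob_sq, EuclideanSpace.norm_sq_eq, Finset.sum_comm (γ := m)]

lemma frob_mul_le_opNorm_mul_frob [DecidableEq m] (A : Matrix l m ℝ) (B : Matrix m n ℝ) :
    frob (A * B) ≤ opNorm A * frob B := by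
  rw [← pow_le_pow_iff_left₀ (frob_nonneg _) (mul_nonneg (opNorm_nonneg A) (frob_nonneg B))
    two_ne_zero, mul_pow, frob_sq_eq_sum_norm_col_sq, frob_sq_eq_sum_norm_col_sq, Finset.mul_sum]
  gcongr with j
  rw [← mul_pow]
  gcongr
  have hcol : (A * B)ᵀ j = A *ᵥ Bᵀ j := by
    ext i
    simp [mul_apply, mulVec, dotProduct]
  rw [hcol]
  exact l2_opNorm_mulVec A ((EuclideanSpace.equiv m ℝ).symm (Bᵀ j))

lemma frob_mul_le_frob_mul_opNorm [DecidableEq m] [DecidableEq n] (A : Matrix l m ℝ)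
    (B : Matrix m n ℝ) : frob (A * B) ≤ frob A * opNorm B := by
  rw [← frob_transpose, transpose_mul, ← frob_transpose A, ← opNorm_transpose B, mul_comm]
  exact frob_mul_le_opNorm_mul_frob _ _

end L2Operator

lemma add_le_sqrt_two_mul_sqrt_sq_add_sq (x y : ℝ) : x + y ≤ √2 * √(x ^ 2 + y ^ 2) := by
  rw [← Real.sqrt_mul zero_le_two]
  exact Real.le_sqrt_of_sq_le add_sq_le

lemma le_apply_csInf_of_forall_le {α β : Type*} [ConditionallyCompleteLinearOrder α]
    [TopologicalSpace α] [OrderTopology α] [LinearOrder β] [TopologicalSpace β]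
    [OrderClosedTopology β] {S : Set α} {g : α → β} {b : β} (hg : Continuous g)
    (hne : S.Nonempty) (hbdd : BddBelow S) (h : ∀ d ∈ S, b ≤ g d) : b ≤ g (sInf S) :=
  closure_minimal h (isClosed_le continuous_const hg) (csInf_mem_closure hne hbdd)

section Perturbation
variable {m m' k : Type*} [Fintype m] [Fintype m'] [Fintype k] [DecidableEq k]
  {P : Matrix k k ℝ}

lemma frob_gram_perturb_le (hP : P ∈ orthogonalGroup k ℝ) (U Δ : Matrix m k ℝ) :
    frob ((U * P + Δ)ᵀ * (U * P + Δ) - Pᵀ * (Uᵀ * U) * P)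
      ≤ 2 * opNorm U * frob Δ + frob Δ ^ 2 := by
  classical
  have hPt := transpose_mem_orthogonalGroup hP
  have hcross : frob (Pᵀ * (Uᵀ * Δ)) ≤ opNorm U * frob Δ := by
    rw [frob_orthogonal_mul _ hPt, ← opNorm_transpose U]
    exact frob_mul_le_opNorm_mul_frob _ _
  have hquad : frob (Δᵀ * Δ) ≤ frob Δ ^ 2 := by
    simpa only [frob_transpose, sq] using frob_mul_le Δᵀ Δ
  have hexpand : (U * P + Δ)ᵀ * (U * P + Δ) - Pᵀ * (Uᵀ * U) * P
      = Pᵀ * (Uᵀ * Δ) + (Pᵀ * (Uᵀ * Δ))ᵀ + Δᵀ * Δ := by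
    simp only [transpose_add, transpose_mul, transpose_transpose, Matrix.add_mul, Matrix.mul_add,
      Matrix.mul_assoc]
    abel
  calc _ ≤ frob (Pᵀ * (Uᵀ * Δ)) + frob (Pᵀ * (Uᵀ * Δ))ᵀ + frob (Δᵀ * Δ) := by
        rw [hexpand]
        exact (frob_add_le _ _).trans (add_le_add_left (frob_add_le _ _) _)
    _ ≤ 2 * opNorm U * frob Δ + frob Δ ^ 2 := by
        rw [frob_transpose]
        linarith

lemma frob_gram_diff_perturb_le (hP : P ∈ orthogonalGroup k ℝ) (U ΔU : Matrix m k ℝ)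
    (V ΔV : Matrix m' k ℝ) :
    frob ((U * P + ΔU)ᵀ * (U * P + ΔU) - (V * P + ΔV)ᵀ * (V * P + ΔV))
      ≤ frob (Uᵀ * U - Vᵀ * V) + (2 * opNorm U * frob ΔU + frob ΔU ^ 2)
        + (2 * opNorm V * frob ΔV + frob ΔV ^ 2) := by
  have hPt := transpose_mem_orthogonalGroup hP
  have hsplit : (U * P + ΔU)ᵀ * (U * P + ΔU) - (V * P + ΔV)ᵀ * (V * P + ΔV)
      = Pᵀ * (Uᵀ * U - Vᵀ * V) * P
        + ((U * P + ΔU)ᵀ * (U * P + ΔU) - Pᵀ * (Uᵀ * U) * P)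
        - ((V * P + ΔV)ᵀ * (V * P + ΔV) - Pᵀ * (Vᵀ * V) * P) := by
    rw [Matrix.mul_sub, Matrix.sub_mul]
    abel
  rw [hsplit]
  refine (frob_sub_le _ _).trans (add_le_add ((frob_add_le _ _).trans (add_le_add ?_
    (frob_gram_perturb_le hP U ΔU))) (frob_gram_perturb_le hP V ΔV))
  rw [frob_mul_orthogonal _ hP, frob_orthogonal_mul _ hPt]

lemma frob_cross_perturb_le (hP : P ∈ orthogonalGroup k ℝ) (U ΔU : Matrix m k ℝ)
    (V ΔV : Matrix m' k ℝ) :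
    frob ((U * P + ΔU) * (V * P + ΔV)ᵀ - U * Vᵀ)
      ≤ opNorm U * frob ΔV + frob ΔU * opNorm V + frob ΔU * frob ΔV := by
  classical
  have hPt := transpose_mem_orthogonalGroup hP
  have hexpand : (U * P + ΔU) * (V * P + ΔV)ᵀ - U * Vᵀ
      = U * (P * ΔVᵀ) + ΔU * Pᵀ * Vᵀ + ΔU * ΔVᵀ := by
    have hUV : U * P * (V * P)ᵀ = U * Vᵀ := by
      rw [transpose_mul, Matrix.mul_assoc, ← Matrix.mul_assoc P,
        (mem_orthogonalGroup_iff _ _).1 hP, Matrix.one_mul]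
    simp only [transpose_add, Matrix.add_mul, Matrix.mul_add, hUV]
    simp only [transpose_mul, Matrix.mul_assoc]
    abel
  have hleft : frob (U * (P * ΔVᵀ)) ≤ opNorm U * frob ΔV := by
    simpa only [frob_orthogonal_mul _ hP, frob_transpose]
      using frob_mul_le_opNorm_mul_frob U (P * ΔVᵀ)
  have hright : frob (ΔU * Pᵀ * Vᵀ) ≤ frob ΔU * opNorm V := by
    simpa only [frob_mul_orthogonal _ hPt, opNorm_transpose]
      using frob_mul_le_frob_mul_opNorm (ΔU * Pᵀ) Vᵀ
  have hquad : frob (ΔU * ΔVᵀ) ≤ frob ΔU * frob ΔV := by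
    simpa only [frob_transpose] using frob_mul_le ΔU ΔVᵀ
  rw [hexpand]
  exact (frob_add_le _ _).trans (add_le_add ((frob_add_le _ _).trans (add_le_add hleft hright))
    hquad)

lemma balance_distance_bounds_of_mem_orthogonalGroup (hP : P ∈ orthogonalGroup k ℝ)
    (U U' : Matrix m k ℝ) (V V' : Matrix m' k ℝ) :
    let d := frob (fromRows U' V' - fromRows U V * P)
    let a := √2 * max (opNorm U) (opNorm V) * d + 1 / 2 * d ^ 2
    frob (U'ᵀ * U' - V'ᵀ * V') ≤ frob (Uᵀ * U - Vᵀ * V) + 2 * a ∧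
      frob (U' * V'ᵀ - U * Vᵀ) ≤ a := by
  obtain ⟨ΔU, rfl⟩ : ∃ ΔU, U' = U * P + ΔU := ⟨U' - U * P, by abel⟩
  obtain ⟨ΔV, rfl⟩ : ∃ ΔV, V' = V * P + ΔV := ⟨V' - V * P, by abel⟩
  intro d a
  have hd : d = √(frob ΔU ^ 2 + frob ΔV ^ 2) := by
    have hrows : fromRows (U * P + ΔU) (V * P + ΔV) - fromRows U V * P = fromRows ΔU ΔV := by
      ext (i | i) j <;> simp [fromRows_mul]
    rw [← frob_fromRows, ← hrows]
  have hsq : frob ΔU ^ 2 + frob ΔV ^ 2 = d ^ 2 := by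
    rw [hd, Real.sq_sqrt (by positivity)]
  have hM : max (opNorm U) (opNorm V) * (frob ΔU + frob ΔV)
      ≤ max (opNorm U) (opNorm V) * (√2 * d) :=
    mul_le_mul_of_nonneg_left (hd ▸ add_le_sqrt_two_mul_sqrt_sq_add_sq _ _)
      ((opNorm_nonneg U).trans (le_max_left _ _))
  have hUU := mul_le_mul_of_nonneg_right (le_max_left (opNorm U) (opNorm V)) (frob_nonneg ΔU)
  have hUV := mul_le_mul_of_nonneg_right (le_max_left (opNorm U) (opNorm V)) (frob_nonneg ΔV)
  have hVU := mul_le_mul_of_nonneg_right (le_max_right (opNorm U) (opNorm V)) (frob_nonneg ΔU)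
  have hVV := mul_le_mul_of_nonneg_right (le_max_right (opNorm U) (opNorm V)) (frob_nonneg ΔV)
  simp only [a]
  constructor
  · refine (frob_gram_diff_perturb_le hP U ΔU V ΔV).trans ?_
    linarith
  · refine (frob_cross_perturb_le hP U ΔU V ΔV).trans ?_
    nlinarith [sq_nonneg (frob ΔU - frob ΔV)]

end Perturbation

/-- Balance and distance perturbation bounds (Lemma SM2.7 of Zilber–Nadler):
with `a = √2·max{σ₁(U), σ₁(V)}·d_P(Z', Z) + (1/2)·d_P(Z', Z)²`, one has
`‖U'ᵀU' − V'ᵀV'‖_F ≤ ‖UᵀU − VᵀV‖_F + 2a` and `‖U'V'ᵀ − UVᵀ‖_F ≤ a`. -/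
theorem update_balance_distance_bounds {n1 n2 r : ℕ}
    (U U' : Matrix (Fin n1) (Fin r) ℝ) (V V' : Matrix (Fin n2) (Fin r) ℝ) :
    let Z := Matrix.fromRows U V
    let Z' := Matrix.fromRows U' V'
    let a := Real.sqrt 2 * max (opNorm U) (opNorm V) * dP Z' Z +
      (1 / 2) * (dP Z' Z) ^ 2
    frob (U'ᵀ * U' - V'ᵀ * V') ≤ frob (Uᵀ * U - Vᵀ * V) + 2 * a ∧
      frob (U' * V'ᵀ - U * Vᵀ) ≤ a := by
  intro Z Z' a
  set S : Set ℝ := {d | ∃ P : Matrix (Fin r) (Fin r) ℝ, Pᵀ * P = 1 ∧ d = frob (Z' - Z * P)}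
  have hne : S.Nonempty := ⟨_, 1, by simp, rfl⟩
  have hbdd : BddBelow S := ⟨0, by rintro _ ⟨P, -, rfl⟩; exact frob_nonneg _⟩
  have hbounds := fun (P : Matrix (Fin r) (Fin r) ℝ) (hP : Pᵀ * P = 1) =>
    balance_distance_bounds_of_mem_orthogonalGroup ((mem_orthogonalGroup_iff' _ _).2 hP) U U' V V'
  have hcont : Continuous fun d : ℝ => √2 * max (opNorm U) (opNorm V) * d + 1 / 2 * d ^ 2 := by
    fun_prop
  constructor
  · refine le_apply_csInf_of_forall_le (continuous_const.add (continuous_const.mul hcont))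
      hne hbdd ?_
    rintro _ ⟨P, hP, rfl⟩
    exact (hbounds P hP).1
  · refine le_apply_csInf_of_forall_le hcont hne hbdd ?_
    rintro _ ⟨P, hP, rfl⟩
    exact (hbounds P hP).2
end

section
/- Let u ∈ R^n be a vector with entries indexed by [n], and suppose a subset S ⊆ [n] has at most α·n elements consisting of 'corrupted' indices, with 0 < α < 1 and γ > 1 such that ⌈γαn⌉ ≤ n. Then among the ⌈γαn⌉ indices with largest magnitude entries of u, at least ⌈(γ−1)αn⌉ are not in S; consequently the ⌈γαn⌉-th largest magnitude of u is at most the ⌈(γ−1)αn⌉-th largest magnitude of the restriction of u to the complement of S. -/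
namespace List

variable {α : Type*} [LinearOrder α] {l : List α}

theorem SortedLE.length_sub_le_countP_lt (hl : l.SortedLE) {d : ℕ} (hd : d < l.length)
    {x : α} (hx : x < l[d]) : l.length - d ≤ l.countP (x < ·) := by
  have hdrop : (l.drop d).countP (x < ·) = l.length - d := by
    rw [countP_eq_length.2, length_drop]
    intro a ha
    obtain ⟨j, hj, rfl⟩ := mem_drop_iff_getElem.1 ha
    exact decide_eq_true (hx.trans_le (hl.getElem_le_getElem_of_le (Nat.le_add_right d j)))
  exact hdrop ▸ (drop_sublist d l).countP_le

theorem SortedLE.succ_le_countP_lt (hl : l.SortedLE) {d : ℕ} (hd : d < l.length)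
    {x : α} (hx : l[d] < x) : d + 1 ≤ l.countP (· < x) := by
  have htake : (l.take (d + 1)).countP (· < x) = d + 1 := by
    rw [countP_eq_length.2, length_take, Nat.min_eq_left hd]
    intro a ha
    obtain ⟨j, hj, rfl⟩ := mem_take_iff_getElem.1 ha
    exact decide_eq_true ((hl.getElem_le_getElem_of_le (by omega)).trans_lt hx)
  exact htake ▸ (take_sublist _ l).countP_le

end List

section OrderStatistic

variable {m : Multiset ℝ} {k : ℕ} {x : ℝ}

theorem kthLargest_eq_getElem (hk : 0 < k) (hkm : k ≤ m.card) :
    kthLargest m k = (m.sort (· ≤ ·))[m.card - k]'(by rw [Multiset.length_sort]; omega) := by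
  simp only [kthLargest, Multiset.length_sort]
  exact List.getD_eq_getElem _ _ _

theorem kthLargest_le (hk : 0 < k) (hkm : k ≤ m.card) (hx : m.countP (x < ·) < k) :
    kthLargest m k ≤ x := by
  rw [kthLargest_eq_getElem hk hkm]
  by_contra! h
  have := (Multiset.pairwise_sort m (· ≤ ·)).sortedLE.length_sub_le_countP_lt _ h
  rw [← Multiset.coe_countP, Multiset.sort_eq, Multiset.length_sort,
    Nat.sub_sub_self hkm] at this
  exact hx.not_ge this

theorem le_kthLargest (hk : 0 < k) (hkm : k ≤ m.card) (hx : k ≤ m.countP (x ≤ ·)) :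
    x ≤ kthLargest m k := by
  rw [kthLargest_eq_getElem hk hkm]
  by_contra! h
  have := (Multiset.pairwise_sort m (· ≤ ·)).sortedLE.succ_le_countP_lt _ h
  rw [← Multiset.coe_countP, Multiset.sort_eq] at this
  have hsplit := Multiset.card_eq_countP_add_countP (x ≤ ·) m
  simp only [not_le] at hsplit
  omega

end OrderStatistic

section Finset

variable {ι : Type*} (f : ι → ℝ)

theorem kthLargest_map_univ_le_of_mem [Fintype ι] {T : Finset ι}
    (htop : ∀ i ∈ T, ∀ j ∉ T, f j ≤ f i) {i : ι} (hi : i ∈ T) :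
    kthLargest (Finset.univ.val.map f) T.card ≤ f i := by
  classical
  have hbigger : Finset.univ.filter (fun j => f i < f j) ⊆ T.erase i := by
    intro j hj
    have hlt := (Finset.mem_filter.1 hj).2
    exact Finset.mem_erase.2 ⟨fun h => (h ▸ hlt).false,
      by_contra fun hjT => (htop i hi j hjT).not_gt hlt⟩
  apply kthLargest_le (Finset.card_pos.2 ⟨i, hi⟩) (by simpa using T.card_le_univ)
  rw [Multiset.countP_map]
  calc _ ≤ (T.erase i).card := Finset.card_le_card hbigger
    _ < T.card := Finset.card_erase_lt_of_mem hi

theorem le_kthLargest_map {s A : Finset ι} (hAs : A ⊆ s) {k : ℕ} (hk : 0 < k)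
    (hkA : k ≤ A.card) {x : ℝ} (hx : ∀ j ∈ A, x ≤ f j) : x ≤ kthLargest (s.val.map f) k := by
  classical
  apply le_kthLargest hk (by simpa using hkA.trans (Finset.card_le_card hAs))
  rw [Multiset.countP_map]
  calc k ≤ A.card := hkA
    _ ≤ (s.filter fun j => x ≤ f j).card :=
      Finset.card_le_card fun j hj => Finset.mem_filter.2 ⟨hAs hj, hx j hj⟩

end Finset

theorem top_indices_uncorrupted_general {n : ℕ} (u : Fin n → ℝ) (S : Finset (Fin n))
    (α γ : ℝ) (hα0 : 0 < α) (hγ : 1 < γ)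
    (hS : (S.card : ℝ) ≤ α * n)
    (T : Finset (Fin n)) (hT : T.card = ⌈γ * α * n⌉₊)
    (htop : ∀ i ∈ T, ∀ j ∉ T, |u j| ≤ |u i|) :
    ⌈(γ - 1) * α * n⌉₊ ≤ (T \ S).card ∧
      kthLargest (Finset.univ.val.map fun i => |u i|) ⌈γ * α * n⌉₊ ≤
        kthLargest ((Sᶜ).val.map fun i => |u i|) ⌈(γ - 1) * α * n⌉₊ := by
  have hmS : ⌈(γ - 1) * α * n⌉₊ + S.card ≤ ⌈γ * α * n⌉₊ := by
    rw [← Nat.ceil_add_natCast (by have := sub_pos.2 hγ; positivity)]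
    exact Nat.ceil_mono (by linarith)
  have hTS : ⌈(γ - 1) * α * n⌉₊ ≤ (T \ S).card := by
    have := Finset.le_card_sdiff S T
    omega
  refine ⟨hTS, ?_⟩
  rcases Nat.eq_zero_or_pos n with rfl | hn
  · -- both multisets are empty, so both sides are the out-of-range value `0`
    simp [kthLargest]
  have hm : 0 < ⌈(γ - 1) * α * n⌉₊ := Nat.ceil_pos.2 (by have := sub_pos.2 hγ; positivity)
  refine le_kthLargest_map _ (fun j hj => Finset.mem_compl.2 (Finset.mem_sdiff.1 hj).2) hm hTS
    fun j hj => ?_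
  exact hT ▸ kthLargest_map_univ_le_of_mem _ htop (Finset.mem_sdiff.1 hj).1

/-- If at most `α·n` of the indices are corrupted (`S`), `γ > 1`, and `T` is a set
of `⌈γαn⌉` indices carrying the largest magnitudes of `u`, then at least
`⌈(γ−1)αn⌉` indices of `T` are uncorrupted; consequently the `⌈γαn⌉`-th largest
magnitude of `u` is at most the `⌈(γ−1)αn⌉`-th largest magnitude of `u`
restricted to the complement of `S`. -/
theorem top_indices_uncorrupted {n : ℕ} (u : Fin n → ℝ) (S : Finset (Fin n))
    (α γ : ℝ) (hα0 : 0 < α) (hα1 : α < 1) (hγ : 1 < γ)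
    (hS : (S.card : ℝ) ≤ α * n) (hk : ⌈γ * α * n⌉₊ ≤ n)
    (T : Finset (Fin n)) (hT : T.card = ⌈γ * α * n⌉₊)
    (htop : ∀ i ∈ T, ∀ j ∉ T, |u j| ≤ |u i|) :
    ⌈(γ - 1) * α * n⌉₊ ≤ (T \ S).card ∧
      kthLargest (Finset.univ.val.map fun i => |u i|) ⌈γ * α * n⌉₊ ≤
        kthLargest ((Sᶜ).val.map fun i => |u i|) ⌈(γ - 1) * α * n⌉₊ :=
  top_indices_uncorrupted_general u S α γ hα0 hγ hS T hT htop
end
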